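/- For the geodesic line γ(t) = (w_0(1 + e^{2t} w_0)^{-1}, w(1 + e^{2t} w_0)^{-1}) in the Siegel domain of quaternionic hyperbolic n-space, with (w_0,w) a point of the boundary satisfying tr w_0 = n(w) and w_0 ≠ 0, the function s(t) = tr(w_0(1+e^{2t}w_0)^{-1}) - n(w(1+e^{2t}w_0)^{-1}) equals 2 e^{2t} n(w_0)/n(1 + e^{2t} w_0), and its maximum over t ∈ R is 2 n(w_0) / (2 n(w_0)^{1/2} + n(w)), attained at e^{2t} = n(w_0)^{-1/2}. -/

import Mathlib

/-!
Write `u = 1 + e^{2t} w₀`. Since `u⁻¹ = ū / n(u)` and `w₀ ū = w₀ + e^{2t} n(w₀)`, the trace term of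
`s(t)` is `(tr w₀ + 2 e^{2t} n(w₀)) / n(u)`, while the norm term is `n(w) / n(u) = tr w₀ / n(u)`;
they cancel up to `2 e^{2t} n(w₀) / n(u)`. With `n(u) = 1 + e^{2t} tr w₀ + e^{4t} n(w₀)`, the bound
on `s` is the AM–GM inequality `2 e^{2t} n(w₀)^{1/2} ≤ 1 + e^{4t} n(w₀)`, with equality when
`e^{2t} = n(w₀)^{-1/2}`.
-/

noncomputable section

open Quaternion

variable (n : ℕ)

/-- The height function `s(t) = tr(w₀(1+e^{2t}w₀)⁻¹) - n(w(1+e^{2t}w₀)⁻¹)` along the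
geodesic line `γ(t) = (w₀(1+e^{2t}w₀)⁻¹, w(1+e^{2t}w₀)⁻¹)` of the Siegel domain. -/
def geodHeight (w₀ : Quaternion ℝ) (w : Fin (n - 1) → Quaternion ℝ) (t : ℝ) : ℝ :=
  2 * (w₀ * ((1 : Quaternion ℝ) + Real.exp (2 * t) • w₀)⁻¹).re -
    ∑ i, normSq (w i * ((1 : Quaternion ℝ) + Real.exp (2 * t) • w₀)⁻¹)

namespace Quaternion

theorem normSq_one_add_smul {R : Type*} [CommRing R] (a : R) (q : ℍ[R]) :
    normSq (1 + a • q) = 1 + a * (2 * q.re) + a ^ 2 * normSq q := by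
  rw [normSq_add, map_one, normSq_smul, one_mul, star_smul, re_smul, re_star, smul_eq_mul]
  ring

theorem mul_star_one_add_smul {R : Type*} [CommRing R] (a : R) (q : ℍ[R]) :
    q * star (1 + a • q) = q + ↑(a * normSq q) := by
  rw [star_add, star_one, star_smul, mul_add, mul_one, mul_smul_comm, self_mul_star, smul_coe]

theorem eq_two_mul_re_of_self_add_star_eq_coe {R : Type*} [CommRing R] {q : ℍ[R]} {x : R}
    (h : q + star q = x) : x = 2 * q.re :=
  (coe_injective ((self_add_star' q).symm.trans h)).symm

variable {R : Type*} [Field R] [LinearOrder R] [IsStrictOrderedRing R]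

theorem re_mul_inv (p u : ℍ[R]) : (p * u⁻¹).re = (p * star u).re / normSq u := by
  rw [inv_def, mul_smul_comm, re_smul, smul_eq_mul, inv_mul_eq_div]

end Quaternion

/-- The height `s(t)` as a function of `a = e^{2t}`, `N = n(w₀)` and `S = n(w) = tr w₀`. -/
def heightProfile (N S a : ℝ) : ℝ := 2 * a * N / (1 + a * S + a ^ 2 * N)

theorem heightProfile_le {N S a : ℝ} (hN : 0 < N) (hS : 0 ≤ S) (ha : 0 ≤ a) :
    heightProfile N S a ≤ 2 * N / (2 * √N + S) := by
  rw [heightProfile, div_le_div_iff₀ (by positivity) (by positivity)]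
  -- after clearing denominators this is `2 a √N ≤ 1 + a² N`, i.e. `(1 - a √N)² ≥ 0`
  have hsq : N * (1 - a * √N) ^ 2 = N * (1 - 2 * a * √N + a ^ 2 * N) := by
    rw [sub_sq, mul_pow, Real.sq_sqrt hN.le]; ring
  nlinarith [mul_nonneg hN.le (sq_nonneg (1 - a * √N))]

theorem heightProfile_inv_sqrt {N : ℝ} (hN : 0 < N) (S : ℝ) :
    heightProfile N S (√N)⁻¹ = 2 * N / (2 * √N + S) := by
  have hr : √N ≠ 0 := (Real.sqrt_pos.mpr hN).ne'
  have hN' : √N ^ 2 = N := Real.sq_sqrt hN.le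
  set r := √N
  rw [heightProfile, ← hN']
  field_simp
  ring

variable {n}

theorem geodHeight_eq {w₀ : ℍ[ℝ]} {w : Fin (n - 1) → ℍ[ℝ]}
    (htr : w₀ + star w₀ = ((∑ i, normSq (w i) : ℝ) : ℍ[ℝ])) (t : ℝ) :
    geodHeight n w₀ w t
      = 2 * Real.exp (2 * t) * normSq w₀ / normSq (1 + Real.exp (2 * t) • w₀) := by
  have hsum (u : ℍ[ℝ]) : ∑ i, normSq (w i * u⁻¹) = (∑ i, normSq (w i)) / normSq u := by
    rw [Finset.sum_div]
    simp only [map_mul, normSq_inv, div_eq_mul_inv]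
  rw [geodHeight, re_mul_inv, mul_star_one_add_smul, re_add, re_coe, hsum,
    eq_two_mul_re_of_self_add_star_eq_coe htr]
  ring

theorem geodHeight_eq_heightProfile {w₀ : ℍ[ℝ]} {w : Fin (n - 1) → ℍ[ℝ]}
    (htr : w₀ + star w₀ = ((∑ i, normSq (w i) : ℝ) : ℍ[ℝ])) (t : ℝ) :
    geodHeight n w₀ w t = heightProfile (normSq w₀) (∑ i, normSq (w i)) (Real.exp (2 * t)) := by
  rw [geodHeight_eq htr, normSq_one_add_smul, ← eq_two_mul_re_of_self_add_star_eq_coe htr,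
    heightProfile]

theorem geodesic_height_formula_and_max_general
    (w₀ : Quaternion ℝ) (w : Fin (n - 1) → Quaternion ℝ) (hw₀ : w₀ ≠ 0)
    (htr : w₀ + star w₀ = ((∑ i, normSq (w i) : ℝ) : Quaternion ℝ)) :
    (∀ t : ℝ, geodHeight n w₀ w t
        = 2 * Real.exp (2 * t) * normSq w₀
          / normSq ((1 : Quaternion ℝ) + Real.exp (2 * t) • w₀)) ∧
    (∀ t : ℝ, geodHeight n w₀ w t
        ≤ 2 * normSq w₀ / (2 * Real.sqrt (normSq w₀) + ∑ i, normSq (w i))) ∧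
    (∀ t : ℝ, Real.exp (2 * t) = (Real.sqrt (normSq w₀))⁻¹ →
        geodHeight n w₀ w t
          = 2 * normSq w₀ / (2 * Real.sqrt (normSq w₀) + ∑ i, normSq (w i))) := by
  have hN : 0 < normSq w₀ := normSq_nonneg.lt_of_ne' (normSq_ne_zero.mpr hw₀)
  have hS : 0 ≤ ∑ i, normSq (w i) := Finset.sum_nonneg fun i _ => normSq_nonneg
  refine ⟨geodHeight_eq htr, fun t => ?_, fun t ht => ?_⟩
  · rw [geodHeight_eq_heightProfile htr]
    exact heightProfile_le hN hS (Real.exp_pos _).le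
  · rw [geodHeight_eq_heightProfile htr, ht]
    exact heightProfile_inv_sqrt hN _

/-- Along the geodesic `γ(t) = (w₀(1+e^{2t}w₀)⁻¹, w(1+e^{2t}w₀)⁻¹)` from a boundary
point `(w₀,w)` (with `tr w₀ = n(w)`, `w₀ ≠ 0`) to `(0,0)`, the height function
`s(t)` equals `2 e^{2t} n(w₀)/n(1+e^{2t}w₀)`, and its maximum over `t ∈ ℝ` is
`2 n(w₀)/(2 n(w₀)^{1/2} + n(w))`, attained at `e^{2t} = n(w₀)^{-1/2}`. -/
theorem geodesic_height_formula_and_max (hn : 2 ≤ n)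
    (w₀ : Quaternion ℝ) (w : Fin (n - 1) → Quaternion ℝ) (hw₀ : w₀ ≠ 0)
    (htr : w₀ + star w₀ = ((∑ i, normSq (w i) : ℝ) : Quaternion ℝ)) :
    (∀ t : ℝ, geodHeight n w₀ w t
        = 2 * Real.exp (2 * t) * normSq w₀
          / normSq ((1 : Quaternion ℝ) + Real.exp (2 * t) • w₀)) ∧
    (∀ t : ℝ, geodHeight n w₀ w t
        ≤ 2 * normSq w₀ / (2 * Real.sqrt (normSq w₀) + ∑ i, normSq (w i))) ∧
    (∀ t : ℝ, Real.exp (2 * t) = (Real.sqrt (normSq w₀))⁻¹ →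
        geodHeight n w₀ w t
          = 2 * normSq w₀ / (2 * Real.sqrt (normSq w₀) + ∑ i, normSq (w i))) :=
  geodesic_height_formula_and_max_general w₀ w hw₀ htr
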